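/- Let d ≥ 1, K > 0, k₁ > 0, x₀ ∈ ℝ^d and let p ≥ 2 be a real number. There exist constants α_p ≥ 0 and β_p ≥ 0, depending only on p, K, k₁, ‖x₀‖ and on the values ‖b(x₀)‖ and ‖σ(x₀)‖, such that: whenever b : ℝ^d → ℝ^d satisfies ⟨b(y) − b(x), y − x⟩ ≤ −K‖y − x‖² for all x, y; f : ℝ^d → ℝ^d satisfies ‖f(x)‖ ≤ k₁(1 + ‖x‖) for all x; σ : ℝ^d → M_{d×d}(ℝ) is k₁-Lipschitz in the Frobenius norm; and φ : ℝ^d → ℝ is any function with 0 ≤ φ(x) ≤ 1 for all x, then for every x ∈ ℝ^d with x ≠ x₀, p‖x − x₀‖^{p−2}⟨x − x₀, φ(x)b(x) + f(x)⟩ + (p/2)‖x − x₀‖^{p−2}‖σ(x)‖² + (p(p−2)/2)‖x − x₀‖^{p−4}‖σ(x)ᵀ(x − x₀)‖² ≤ α_p‖x − x₀‖^p + β_p‖x − x₀‖^{p−2}. In particular the constants do not depend on the cutoff function φ. -/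

import Mathlib

/-!
The constants come from three pointwise estimates at distance `r = ‖x - x₀‖ > 0`. Dissipativity
of `b` gives `⟪x - x₀, b x⟫ ≤ ⟪x - x₀, b x₀⟫`, and since `0 ≤ φ ≤ 1` the cut-off can only shrink
the drift's positive part, so the drift term is at most `r (‖b x₀‖ + k₁ (1 + ‖x₀‖ + r))`. The
Lipschitz bound gives `‖σ x‖ ≤ ‖σ x₀‖ + k₁ r`, and `‖σ(x)ᵀ(x - x₀)‖ ≤ ‖σ x‖ r`. Factoring out
`r ^ (p - 2)` leaves a quadratic polynomial in `r`, whose linear term is absorbed via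
`r ≤ 1 + r ^ 2`.
-/

open scoped RealInnerProductSpace

/-- The Frobenius norm of a real `d × d` matrix. -/
noncomputable def frobNorm {d : ℕ} (A : Matrix (Fin d) (Fin d) ℝ) : ℝ :=
  Real.sqrt (∑ i, ∑ j, (A i j) ^ 2)

/-- The Euclidean norm of a vector given as a plain function `Fin d → ℝ`. -/
noncomputable def eucNorm {d : ℕ} (v : Fin d → ℝ) : ℝ :=
  Real.sqrt (∑ i, (v i) ^ 2)

section Frobenius

attribute [local instance] Matrix.frobeniusNormedAddCommGroup

lemma frobNorm_eq_norm {d : ℕ} (A : Matrix (Fin d) (Fin d) ℝ) : frobNorm A = ‖A‖ := by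
  simp [frobNorm, Matrix.frobenius_norm_def, Real.sqrt_eq_rpow]

lemma eucNorm_eq_norm {d : ℕ} (v : Fin d → ℝ) : eucNorm v = ‖WithLp.toLp 2 v‖ := by
  simp [eucNorm, EuclideanSpace.norm_eq]

lemma frobNorm_le_add {d : ℕ} (A B : Matrix (Fin d) (Fin d) ℝ) :
    frobNorm A ≤ frobNorm B + frobNorm (A - B) := by
  simp only [frobNorm_eq_norm]
  exact norm_le_norm_add_norm_sub' A B

lemma eucNorm_transpose_mulVec_le {d : ℕ} (A : Matrix (Fin d) (Fin d) ℝ)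
    (v : EuclideanSpace ℝ (Fin d)) :
    eucNorm (A.transpose.mulVec (WithLp.equiv 2 (Fin d → ℝ) v)) ≤ frobNorm A * ‖v‖ := by
  have h := Matrix.frobenius_norm_mul A.transpose (Matrix.replicateCol Unit (WithLp.equiv 2 _ v))
  rw [← Matrix.replicateCol_mulVec, Matrix.frobenius_norm_replicateCol,
    Matrix.frobenius_norm_replicateCol, Matrix.frobenius_norm_transpose] at h
  simpa [eucNorm_eq_norm, frobNorm_eq_norm] using h

end Frobenius

section Drift

variable {E : Type*} [NormedAddCommGroup E] [InnerProductSpace ℝ E]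

lemma inner_le_norm_mul_norm_of_inner_sub_nonpos {w u v : E} (h : ⟪u - v, w⟫ ≤ 0) :
    ⟪w, u⟫ ≤ ‖w‖ * ‖v‖ := by
  have hsplit : ⟪w, u⟫ = ⟪w, u - v⟫ + ⟪w, v⟫ := by rw [← inner_add_right, sub_add_cancel]
  rw [real_inner_comm] at h
  linarith [real_inner_le_norm w v]

lemma inner_smul_add_le_of_inner_sub_nonpos {w u v g : E} {c : ℝ} (hc₀ : 0 ≤ c) (hc₁ : c ≤ 1)
    (h : ⟪u - v, w⟫ ≤ 0) : ⟪w, c • u + g⟫ ≤ ‖w‖ * (‖v‖ + ‖g‖) := by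
  have hu := inner_le_norm_mul_norm_of_inner_sub_nonpos h
  have hwv : 0 ≤ ‖w‖ * ‖v‖ := by positivity
  have hcu : c * ⟪w, u⟫ ≤ ‖w‖ * ‖v‖ :=
    calc c * ⟪w, u⟫ ≤ c * (‖w‖ * ‖v‖) := mul_le_mul_of_nonneg_left hu hc₀
      _ ≤ ‖w‖ * ‖v‖ := mul_le_of_le_one_left hwv hc₁
  rw [inner_add_right, real_inner_smul_right]
  linarith [real_inner_le_norm w g]

end Drift

section Generator

variable {p r I F G M k C : ℝ}

lemma rpow_sub_two_eq_div_sq (hr : 0 < r) (q : ℝ) : r ^ (q - 2) = r ^ q / r ^ 2 := by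
  rw [Real.rpow_sub hr, Real.rpow_two]

lemma generator_div_rpow_le_of_bounds (hp : 2 ≤ p) (hr : 0 < r) (hM : 0 ≤ M)
    (hI : I ≤ r * (M + k * r)) (hF₀ : 0 ≤ F) (hF : F ≤ C + k * r) (hG₀ : 0 ≤ G)
    (hG : G ≤ F * r) :
    p * I + p / 2 * F ^ 2 + p * (p - 2) / 2 * (G ^ 2 / r ^ 2)
      ≤ (p * M + p * k + p * (p - 1) * k ^ 2) * r ^ 2 + (p * M + p * (p - 1) * C ^ 2) := by
  have hGF : G ^ 2 / r ^ 2 ≤ F ^ 2 :=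
    div_le_of_le_mul₀ (by positivity) (sq_nonneg F) (by rw [← mul_pow]; gcongr)
  have hF2 : F ^ 2 ≤ 2 * C ^ 2 + 2 * k ^ 2 * r ^ 2 := by
    nlinarith [sq_nonneg (C - k * r)]
  have hr2 : r ≤ 1 + r ^ 2 := by nlinarith [sq_nonneg (r - 1)]
  have hp0 : 0 ≤ p := by linarith
  have hp2 : 0 ≤ p * (p - 2) / 2 := by nlinarith
  calc p * I + p / 2 * F ^ 2 + p * (p - 2) / 2 * (G ^ 2 / r ^ 2)
      ≤ p * (M * r + k * r ^ 2) + p * (p - 1) / 2 * F ^ 2 := by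
        nlinarith [mul_le_mul_of_nonneg_left hGF hp2, mul_le_mul_of_nonneg_left hI hp0]
    _ ≤ p * (M * (1 + r ^ 2) + k * r ^ 2)
          + p * (p - 1) / 2 * (2 * C ^ 2 + 2 * k ^ 2 * r ^ 2) := by
        gcongr
        linarith
    _ = _ := by ring

lemma generator_le_of_bounds (hp : 2 ≤ p) (hr : 0 < r) (hM : 0 ≤ M)
    (hI : I ≤ r * (M + k * r)) (hF₀ : 0 ≤ F) (hF : F ≤ C + k * r) (hG₀ : 0 ≤ G)
    (hG : G ≤ F * r) :
    p * r ^ (p - 2) * I + p / 2 * r ^ (p - 2) * F ^ 2 + p * (p - 2) / 2 * r ^ (p - 4) * G ^ 2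
      ≤ (p * M + p * k + p * (p - 1) * k ^ 2) * r ^ p
        + (p * M + p * (p - 1) * C ^ 2) * r ^ (p - 2) := by
  have h4 : r ^ (p - 4) = r ^ (p - 2) / r ^ 2 := by
    rw [← rpow_sub_two_eq_div_sq hr, sub_sub]; norm_num
  have hp' : r ^ p = r ^ (p - 2) * r ^ 2 := by
    rw [rpow_sub_two_eq_div_sq hr, div_mul_cancel₀ _ (by positivity)]
  have key := mul_le_mul_of_nonneg_left
    (generator_div_rpow_le_of_bounds hp hr hM hI hF₀ hF hG₀ hG) (Real.rpow_nonneg hr.le (p - 2))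
  rw [h4, hp']
  linear_combination key

end Generator

theorem stmt4_general {d : ℕ} (K k₁ p : ℝ) (hK : 0 < K) (hk₁ : 0 < k₁)
    (hp : 2 ≤ p) (x₀ : EuclideanSpace ℝ (Fin d)) (Cb Cσ : ℝ) :
    ∃ αp βp : ℝ, 0 ≤ αp ∧ 0 ≤ βp ∧
      ∀ (b f : EuclideanSpace ℝ (Fin d) → EuclideanSpace ℝ (Fin d))
        (σ : EuclideanSpace ℝ (Fin d) → Matrix (Fin d) (Fin d) ℝ)
        (φ : EuclideanSpace ℝ (Fin d) → ℝ),
        ‖b x₀‖ = Cb → frobNorm (σ x₀) = Cσ →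
        (∀ x y, ⟪b y - b x, y - x⟫ ≤ -K * ‖y - x‖ ^ 2) →
        (∀ x, ‖f x‖ ≤ k₁ * (1 + ‖x‖)) →
        (∀ x y, frobNorm (σ x - σ y) ≤ k₁ * ‖x - y‖) →
        (∀ x, 0 ≤ φ x ∧ φ x ≤ 1) →
        ∀ x : EuclideanSpace ℝ (Fin d), x ≠ x₀ →
          p * ‖x - x₀‖ ^ (p - 2) * ⟪x - x₀, φ x • b x + f x⟫
            + (p / 2) * ‖x - x₀‖ ^ (p - 2) * frobNorm (σ x) ^ 2
            + (p * (p - 2) / 2) * ‖x - x₀‖ ^ (p - 4)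
              * eucNorm ((σ x).transpose.mulVec (WithLp.equiv 2 (Fin d → ℝ) (x - x₀))) ^ 2
          ≤ αp * ‖x - x₀‖ ^ p + βp * ‖x - x₀‖ ^ (p - 2) := by
  set M := |Cb| + k₁ * (1 + ‖x₀‖)
  have hM : 0 ≤ M := by positivity
  have hp1 : 0 ≤ p * (p - 1) := by nlinarith
  refine ⟨p * M + p * k₁ + p * (p - 1) * k₁ ^ 2, p * M + p * (p - 1) * Cσ ^ 2,
    by positivity, by positivity, ?_⟩
  intro b f σ φ hCb hCσ hb hf hσ hφ x hx
  have hr : 0 < ‖x - x₀‖ := norm_pos_iff.2 (sub_ne_zero.2 hx)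
  have hdiss : ⟪b x - b x₀, x - x₀⟫ ≤ 0 :=
    (hb x₀ x).trans (mul_nonpos_of_nonpos_of_nonneg (neg_nonpos.2 hK.le) (sq_nonneg _))
  have hfx : ‖b x₀‖ + ‖f x‖ ≤ M + k₁ * ‖x - x₀‖ := by
    nlinarith [hf x, norm_le_norm_add_norm_sub' x x₀, le_abs_self Cb]
  have hI : ⟪x - x₀, φ x • b x + f x⟫ ≤ ‖x - x₀‖ * (M + k₁ * ‖x - x₀‖) :=
    (inner_smul_add_le_of_inner_sub_nonpos (hφ x).1 (hφ x).2 hdiss).trans (by gcongr)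
  have hF : frobNorm (σ x) ≤ Cσ + k₁ * ‖x - x₀‖ :=
    hCσ ▸ (frobNorm_le_add (σ x) (σ x₀)).trans (add_le_add_right (hσ x x₀) _)
  exact generator_le_of_bounds hp hr hM hI (Real.sqrt_nonneg _) hF (Real.sqrt_nonneg _)
    (eucNorm_transpose_mulVec_le _ _)

theorem stmt4 {d : ℕ} (hd : 1 ≤ d) (K k₁ p : ℝ) (hK : 0 < K) (hk₁ : 0 < k₁)
    (hp : 2 ≤ p) (x₀ : EuclideanSpace ℝ (Fin d)) (Cb Cσ : ℝ) :
    ∃ αp βp : ℝ, 0 ≤ αp ∧ 0 ≤ βp ∧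
      ∀ (b f : EuclideanSpace ℝ (Fin d) → EuclideanSpace ℝ (Fin d))
        (σ : EuclideanSpace ℝ (Fin d) → Matrix (Fin d) (Fin d) ℝ)
        (φ : EuclideanSpace ℝ (Fin d) → ℝ),
        ‖b x₀‖ = Cb → frobNorm (σ x₀) = Cσ →
        (∀ x y, ⟪b y - b x, y - x⟫ ≤ -K * ‖y - x‖ ^ 2) →
        (∀ x, ‖f x‖ ≤ k₁ * (1 + ‖x‖)) →
        (∀ x y, frobNorm (σ x - σ y) ≤ k₁ * ‖x - y‖) →
        (∀ x, 0 ≤ φ x ∧ φ x ≤ 1) →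
        ∀ x : EuclideanSpace ℝ (Fin d), x ≠ x₀ →
          p * ‖x - x₀‖ ^ (p - 2) * ⟪x - x₀, φ x • b x + f x⟫
            + (p / 2) * ‖x - x₀‖ ^ (p - 2) * frobNorm (σ x) ^ 2
            + (p * (p - 2) / 2) * ‖x - x₀‖ ^ (p - 4)
              * eucNorm ((σ x).transpose.mulVec (WithLp.equiv 2 (Fin d → ℝ) (x - x₀))) ^ 2
          ≤ αp * ‖x - x₀‖ ^ p + βp * ‖x - x₀‖ ^ (p - 2) :=
  stmt4_general K k₁ p hK hk₁ hp x₀ Cb Cσ
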